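/- arXiv:2405.01278 — 4 statements merged into one kernel-verified Lean document; each statement's English description precedes it below -/
import Mathlib

section
/- Let n ≥ 1 and let S be a nonempty set of positive integers. Then in ℂ[X] one has ∏_{d ∣ n} Φ_{D,S,d}(X) = ∏_{d ∣ n, n/d ∈ S} (X^d − 1), where on the left the product runs over all positive divisors d of n, and on the right over those divisors d of n with n/d ∈ S. -/
/-!
Both sides are products of cyclotomic polynomials. The `j ∈ [1, d]` with `gcd(j, d) = s` are
the multiples `s j'` with `j'` prime to `d / s`, and `ζ_d ^ (s j') = ζ_{d/s} ^ j'`, so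
`Φ_{D,S,d} = ∏_{s ∣ d, s ∈ S} Φ_{d/s}`. Summing over `d ∣ n` and regrouping by `s` gives
`∏_{s ∣ n, s ∈ S} ∏_{m ∣ n/s} Φ_m = ∏_{s ∣ n, s ∈ S} (X ^ (n/s) - 1)`.
-/

open Complex Polynomial Finset

noncomputable def genCyc (S : Set ℕ) [DecidablePred (· ∈ S)] (n : ℕ) : Polynomial ℂ :=
  ∏ j ∈ (Finset.Icc 1 n).filter (fun j => Nat.gcd j n ∈ S),
    (X - C (Complex.exp (2 * Real.pi * Complex.I / n) ^ j))

theorem Finset.prod_Icc_one_eq_prod_range {M : Type*} [CommMonoid M] (f : ℕ → M) {d : ℕ}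
    (h : f d = f 0) : ∏ j ∈ Icc 1 d, f j = ∏ j ∈ range d, f j := by
  cases d with
  | zero => simp
  | succ d =>
    rw [prod_range_succ', ← h, ← Ico_add_one_right_eq_Icc, ← prod_Ico_add' f 0 (d + 1) 1,
      ← range_eq_Ico, prod_range_succ]

theorem Nat.prod_divisors_prod_divisors {M : Type*} [CommMonoid M] (n : ℕ)
    (f : ℕ → ℕ → M) :
    ∏ d ∈ n.divisors, ∏ s ∈ d.divisors, f s (d / s) =
      ∏ s ∈ n.divisors, ∏ m ∈ (n / s).divisors, f s m := by
  rw [prod_sigma', prod_sigma']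
  refine prod_nbij' (fun x => ⟨x.2, x.1 / x.2⟩) (fun x => ⟨x.1 * x.2, x.1⟩) ?_ ?_ ?_ ?_
    fun _ _ => rfl
  · rintro ⟨d, s⟩ h
    simp only [mem_sigma, Nat.mem_divisors] at h ⊢
    obtain ⟨⟨hdn, hn⟩, hsd, -⟩ := h
    have hsn : s ∣ n := hsd.trans hdn
    exact ⟨⟨hsn, hn⟩, Nat.div_dvd_div hsd hdn,
      (Nat.div_ne_zero_iff_of_dvd hsn).2 ⟨hn, ne_zero_of_dvd_ne_zero hn hsn⟩⟩
  · rintro ⟨s, m⟩ h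
    simp only [mem_sigma, Nat.mem_divisors] at h ⊢
    obtain ⟨⟨hsn, hn⟩, hmn, -⟩ := h
    have hsm : s * m ∣ n := Nat.mul_dvd_of_dvd_div hsn hmn
    exact ⟨⟨hsm, hn⟩, dvd_mul_right s m, ne_zero_of_dvd_ne_zero hn hsm⟩
  · rintro ⟨d, s⟩ h
    simp only [mem_sigma, Nat.mem_divisors] at h
    simp only [Nat.mul_div_cancel' h.2.1]
  · rintro ⟨s, m⟩ h
    simp only [mem_sigma, Nat.mem_divisors] at h
    have hs : 0 < s := Nat.pos_of_dvd_of_pos h.1.1 (Nat.pos_of_ne_zero h.1.2)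
    simp only [Nat.mul_div_cancel_left m hs]

namespace IsPrimitiveRoot

variable {K : Type*} [CommRing K] [IsDomain K] {ζ : K} {d : ℕ}

theorem prod_filter_coprime_eq_cyclotomic (hζ : IsPrimitiveRoot ζ d) :
    ∏ j ∈ range d with j.Coprime d, (X - C (ζ ^ j)) = cyclotomic d K := by
  rcases Nat.eq_zero_or_pos d with rfl | hd
  · simp
  have : NeZero d := ⟨hd.ne'⟩
  rw [cyclotomic_eq_prod_X_sub_primitiveRoots hζ]
  refine prod_nbij (ζ ^ ·) (fun j hj => ?_) (fun i hi j hj hij => ?_) (fun μ hμ => ?_)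
    fun _ _ => rfl
  · simp only [mem_filter, mem_range] at hj
    exact (mem_primitiveRoots hd).2 (hζ.pow_of_coprime j hj.2)
  · simp only [coe_filter, mem_range, Set.mem_ofPred_eq] at hi hj
    exact hζ.pow_inj hi.1 hj.1 hij
  · have hμ' := (mem_primitiveRoots hd).1 hμ
    obtain ⟨j, hj, rfl⟩ := hζ.eq_pow_of_pow_eq_one hμ'.pow_eq_one
    exact ⟨j, by simpa [hj] using (hζ.pow_iff_coprime hd j).1 hμ', rfl⟩

theorem prod_filter_gcd_eq_cyclotomic (hζ : IsPrimitiveRoot ζ d) {s : ℕ}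
    (hs : s ∈ d.divisors) :
    ∏ j ∈ range d with j.gcd d = s, (X - C (ζ ^ j)) = cyclotomic (d / s) K := by
  obtain ⟨⟨m, rfl⟩, hd⟩ := Nat.mem_divisors.1 hs
  have hs0 : 0 < s := Nat.pos_of_ne_zero (left_ne_zero_of_mul hd)
  rw [Nat.mul_div_cancel_left m hs0,
    ← (hζ.pow (Nat.pos_of_ne_zero hd) rfl).prod_filter_coprime_eq_cyclotomic]
  symm
  refine prod_nbij (s * ·) (fun j hj => ?_) (fun i _ j _ hij => ?_) (fun j hj => ?_)
    fun j _ => by rw [pow_mul]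
  · simp only [mem_filter, mem_range] at hj ⊢
    exact ⟨Nat.mul_lt_mul_of_pos_left hj.1 hs0, by rw [Nat.gcd_mul_left, hj.2, mul_one]⟩
  · exact Nat.eq_of_mul_eq_mul_left hs0 hij
  · simp only [coe_filter, mem_range, Set.mem_ofPred_eq] at hj
    obtain ⟨hjd, hgcd⟩ := hj
    obtain ⟨i, rfl⟩ : s ∣ j := hgcd ▸ Nat.gcd_dvd_left j (s * m)
    refine ⟨i, ?_, rfl⟩
    simp only [coe_filter, mem_range, Set.mem_ofPred_eq]
    refine ⟨Nat.lt_of_mul_lt_mul_left hjd, ?_⟩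
    rwa [Nat.gcd_mul_left, Nat.mul_eq_left hs0.ne'] at hgcd

theorem prod_filter_gcd_mem_eq_prod_cyclotomic (hζ : IsPrimitiveRoot ζ d) (S : Set ℕ)
    [DecidablePred (· ∈ S)] :
    ∏ j ∈ range d with j.gcd d ∈ S, (X - C (ζ ^ j)) =
      ∏ s ∈ d.divisors, if s ∈ S then cyclotomic (d / s) K else 1 := by
  rcases eq_or_ne d 0 with rfl | hd
  · simp
  have hgcd_mem (j) (_ : j ∈ range d) : j.gcd d ∈ d.divisors :=
    Nat.mem_divisors.2 ⟨Nat.gcd_dvd_right j d, hd⟩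
  rw [prod_filter, ← prod_fiberwise_of_maps_to hgcd_mem]
  refine prod_congr rfl fun s hs => ?_
  rw [prod_congr rfl fun j hj => by rw [(mem_filter.1 hj).2], prod_ite_irrel, prod_const_one,
    hζ.prod_filter_gcd_eq_cyclotomic hs]

end IsPrimitiveRoot

theorem genCyc_eq_prod_cyclotomic (S : Set ℕ) [DecidablePred (· ∈ S)] (d : ℕ) :
    genCyc S d = ∏ s ∈ d.divisors, if s ∈ S then cyclotomic (d / s) ℂ else 1 := by
  rcases eq_or_ne d 0 with rfl | hd
  · simp [genCyc]
  have hζ := Complex.isPrimitiveRoot_exp d hd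
  rw [genCyc, prod_filter, prod_Icc_one_eq_prod_range _ (by simp [hζ.pow_eq_one]), ← prod_filter,
    hζ.prod_filter_gcd_mem_eq_prod_cyclotomic]

theorem stmt2_general (S : Set ℕ) [DecidablePred (· ∈ S)] (n : ℕ) :
    ∏ d ∈ n.divisors, genCyc S d =
      ∏ d ∈ n.divisors.filter (fun d => n / d ∈ S), (X ^ d - 1 : Polynomial ℂ) := by
  calc ∏ d ∈ n.divisors, genCyc S d
      = ∏ s ∈ n.divisors, ∏ m ∈ (n / s).divisors,
          if s ∈ S then cyclotomic m ℂ else 1 := by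
        simp only [genCyc_eq_prod_cyclotomic]
        exact Nat.prod_divisors_prod_divisors n fun s m => if s ∈ S then cyclotomic m ℂ else 1
    _ = ∏ s ∈ n.divisors, if s ∈ S then X ^ (n / s) - 1 else 1 := by
        refine prod_congr rfl fun s hs => ?_
        rw [prod_ite_irrel, prod_const_one, prod_cyclotomic_eq_X_pow_sub_one
          (Nat.div_pos (Nat.divisor_le hs) (Nat.pos_of_mem_divisors hs))]
    _ = ∏ e ∈ n.divisors, if n / e ∈ S then X ^ e - 1 else 1 := by
        rw [← Nat.prod_div_divisors]
        refine prod_congr rfl fun s hs => ?_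
        rw [Nat.div_div_self (Nat.dvd_of_mem_divisors hs) (Nat.mem_divisors.1 hs).2]
    _ = _ := (prod_filter _ _).symm

theorem stmt2 (S : Set ℕ) [DecidablePred (· ∈ S)] (hS : S.Nonempty)
    (hSpos : ∀ m ∈ S, 1 ≤ m) (n : ℕ) (hn : 1 ≤ n) :
    ∏ d ∈ n.divisors, genCyc S d =
      ∏ d ∈ n.divisors.filter (fun d => n / d ∈ S), (X ^ d - 1 : Polynomial ℂ) :=
  stmt2_general S n
end

section
/- Let f : ℕ_{≥1} → ℂ be an arbitrary function and let n ≥ 1. Then ∑_{1 ≤ j ≤ n, gcd(j,n) = 1} f(gcd(j−1,n)) = φ(n) · ∑_{d ∣ n} (μ*f)(d)/φ(d), where φ is Euler's totient function and, for j = 1, gcd(0,n) = n. -/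
open Complex Finset

/-- The Dirichlet convolution `(μ*f)(m) = ∑_{e ∣ m} μ(e) f(m/e)` of the Möbius
function with `f`. -/
noncomputable def muConv (f : ℕ → ℂ) (m : ℕ) : ℂ :=
  ∑ e ∈ m.divisors, (ArithmeticFunction.moebius e : ℂ) * f (m / e)

/-- Möbius inversion: summing the Möbius transform over divisors recovers `f`. -/
lemma sum_muConv (f : ℕ → ℂ) (m : ℕ) (hm : m ≠ 0) :
    ∑ d ∈ m.divisors, muConv f d = f m := by
  refine ArithmeticFunction.sum_eq_iff_sum_smul_moebius_eq.mpr ?_ m (Nat.pos_of_ne_zero hm)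
  intro k hk
  rw [Nat.sum_divisorsAntidiagonal (fun e d => (ArithmeticFunction.moebius e : ℤ) • f d)]
  simp [muConv, zsmul_eq_mul]

lemma mem_ker_iff (n d : ℕ) [NeZero n] (hd : d ∣ n) (j : ℕ) (hj : 1 ≤ j)
    (h : Nat.Coprime j n) :
    ZMod.unitsMap hd (ZMod.unitOfCoprime j h) = 1 ↔ d ∣ j - 1 := by
  have hcoe : ((ZMod.unitsMap hd (ZMod.unitOfCoprime j h)) : ZMod d) = (j : ZMod d) := by
    simp [ZMod.unitsMap_def, ZMod.cast_natCast hd]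
  rw [Units.ext_iff, Units.val_one, hcoe,
    show (1 : ZMod d) = ((1 : ℕ) : ZMod d) by simp, ZMod.natCast_eq_natCast_iff]
  constructor
  · intro hmod
    exact (Nat.modEq_iff_dvd' hj).mp hmod.symm
  · intro hdvd
    exact ((Nat.modEq_iff_dvd' hj).mpr hdvd).symm

lemma count_units (n d : ℕ) (hn : 2 ≤ n) (hd : d ∣ n) :
    (((Finset.Icc 1 n).filter (fun j => Nat.gcd j n = 1 ∧ d ∣ j - 1)).card) * d.totient
      = n.totient := by
  have hn0 : n ≠ 0 := by omega
  haveI : NeZero n := ⟨hn0⟩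
  have hd0 : d ≠ 0 := by rintro rfl; exact hn0 (Nat.eq_zero_of_zero_dvd hd)
  haveI : NeZero d := ⟨hd0⟩
  haveI : Fact (1 < n) := ⟨hn⟩
  classical
  set K : Finset (ZMod n)ˣ :=
    Finset.univ.filter (fun u => ZMod.unitsMap hd u = 1) with hK
  have hcard : (((Finset.Icc 1 n).filter
      (fun j => Nat.gcd j n = 1 ∧ d ∣ j - 1)).card) = K.card := by
    refine Finset.card_bij
      (fun j hj => ZMod.unitOfCoprime j (Finset.mem_filter.mp hj).2.1) ?_ ?_ ?_
    · intro j hj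
      obtain ⟨hmem, hcop, hdvd⟩ := Finset.mem_filter.mp hj
      rw [hK, Finset.mem_filter]
      have h1 : 1 ≤ j := (Finset.mem_Icc.mp hmem).1
      exact ⟨Finset.mem_univ _, (mem_ker_iff n d hd j h1 hcop).mpr hdvd⟩
    · intro j₁ hj₁ j₂ hj₂ heq
      obtain ⟨hmem₁, hcop₁, _⟩ := Finset.mem_filter.mp hj₁
      obtain ⟨hmem₂, hcop₂, _⟩ := Finset.mem_filter.mp hj₂
      have hlt₁ : j₁ < n := by
        rcases lt_or_eq_of_le (Finset.mem_Icc.mp hmem₁).2 with h | h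
        · exact h
        · exfalso; rw [h] at hcop₁; rw [Nat.gcd_self] at hcop₁; omega
      have hlt₂ : j₂ < n := by
        rcases lt_or_eq_of_le (Finset.mem_Icc.mp hmem₂).2 with h | h
        · exact h
        · exfalso; rw [h] at hcop₂; rw [Nat.gcd_self] at hcop₂; omega
      have : ((j₁ : ZMod n)) = (j₂ : ZMod n) := by
        have := congrArg (fun u : (ZMod n)ˣ => (u : ZMod n)) heq
        simpa [ZMod.unitOfCoprime] using this
      calc j₁ = (j₁ : ZMod n).val := (ZMod.val_cast_of_lt hlt₁).symm
        _ = (j₂ : ZMod n).val := by rw [this]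
        _ = j₂ := ZMod.val_cast_of_lt hlt₂
    · intro u hu
      rw [hK, Finset.mem_filter] at hu
      set j := (u : ZMod n).val with hj
      have hcop : Nat.Coprime j n := ZMod.val_coe_unit_coprime u
      have hjlt : j < n := ZMod.val_lt _
      have hj1 : 1 ≤ j := by
        rcases Nat.eq_zero_or_pos j with h0 | h0
        · exfalso
          have : (u : ZMod n) = 0 := by
            rw [← ZMod.natCast_rightInverse (u : ZMod n), ← hj, h0]; simp
          have : IsUnit (0 : ZMod n) := this ▸ u.isUnit
          rw [isUnit_zero_iff] at this
          exact zero_ne_one this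
        · exact h0
      have hucast : ((j : ℕ) : ZMod n) = (u : ZMod n) :=
        ZMod.natCast_rightInverse (u : ZMod n)
      have huu : ZMod.unitOfCoprime j hcop = u := by
        ext; simp [ZMod.unitOfCoprime, hucast]
      have hker : ZMod.unitsMap hd (ZMod.unitOfCoprime j hcop) = 1 := by
        rw [huu]; exact hu.2
      have hdvd : d ∣ j - 1 := (mem_ker_iff n d hd j hj1 hcop).mp hker
      refine ⟨j, ?_, ?_⟩
      · exact Finset.mem_filter.mpr ⟨Finset.mem_Icc.mpr ⟨hj1, le_of_lt hjlt⟩, hcop, hdvd⟩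
      · exact huu
  have hker_card : Nat.card (MonoidHom.ker (ZMod.unitsMap hd)) = K.card := by
    rw [Nat.card_eq_fintype_card, hK]
    rw [Fintype.card_subtype]
    congr 1
    ext u
    simp [MonoidHom.mem_ker]
  have hgroup : Nat.card (ZMod n)ˣ
      = Nat.card (ZMod d)ˣ * Nat.card (MonoidHom.ker (ZMod.unitsMap hd)) := by
    rw [Subgroup.card_eq_card_quotient_mul_card_subgroup (MonoidHom.ker (ZMod.unitsMap hd))]
    congr 1
    exact Nat.card_congr
      (QuotientGroup.quotientKerEquivOfSurjective _ (ZMod.unitsMap_surjective hd)).toEquiv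
  rw [hcard, ← hker_card]
  have h1 : Nat.card (ZMod n)ˣ = n.totient := by
    rw [Nat.card_eq_fintype_card]; exact ZMod.card_units_eq_totient n
  have h2 : Nat.card (ZMod d)ˣ = d.totient := by
    rw [Nat.card_eq_fintype_card]; exact ZMod.card_units_eq_totient d
  rw [← h1, hgroup, h2, mul_comm]

theorem stmt13 (f : ℕ → ℂ) (n : ℕ) (hn : 1 ≤ n) :
    ∑ j ∈ (Finset.Icc 1 n).filter (fun j => Nat.gcd j n = 1), f (Nat.gcd (j - 1) n) =
      (Nat.totient n : ℂ) * ∑ d ∈ n.divisors, muConv f d / (Nat.totient d : ℂ) := by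
  rcases eq_or_lt_of_le hn with h1 | h2
  · -- n = 1
    subst h1
    norm_num [muConv]
  · -- n ≥ 2
    have hn2 : 2 ≤ n := h2
    have hn0 : n ≠ 0 := by omega
    classical
    have step1 : ∑ j ∈ (Finset.Icc 1 n).filter (fun j => Nat.gcd j n = 1),
        f (Nat.gcd (j - 1) n)
        = ∑ j ∈ (Finset.Icc 1 n).filter (fun j => Nat.gcd j n = 1),
            ∑ d ∈ n.divisors.filter (· ∣ j - 1), muConv f d := by
      refine Finset.sum_congr rfl fun j hj => ?_
      have hg0 : Nat.gcd (j - 1) n ≠ 0 := by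
        intro h; rw [Nat.gcd_eq_zero_iff] at h; exact hn0 h.2
      rw [← sum_muConv f (Nat.gcd (j - 1) n) hg0]
      congr 1
      ext x
      simp only [Nat.mem_divisors, Finset.mem_filter, Nat.dvd_gcd_iff]
      tauto
    rw [step1]
    have step2 : ∑ j ∈ (Finset.Icc 1 n).filter (fun j => Nat.gcd j n = 1),
        ∑ d ∈ n.divisors.filter (· ∣ j - 1), muConv f d
        = ∑ d ∈ n.divisors,
            (((Finset.Icc 1 n).filter (fun j => Nat.gcd j n = 1 ∧ d ∣ j - 1)).card : ℂ)
              * muConv f d := by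
      have hinner : ∀ j, ∑ d ∈ n.divisors.filter (· ∣ j - 1), muConv f d
          = ∑ d ∈ n.divisors, if d ∣ j - 1 then muConv f d else 0 :=
        fun j => Finset.sum_filter _ _
      simp_rw [hinner]
      rw [Finset.sum_comm]
      refine Finset.sum_congr rfl fun d hd => ?_
      rw [← Finset.sum_filter, Finset.sum_const, Finset.filter_filter, nsmul_eq_mul]
    rw [step2, Finset.mul_sum]
    refine Finset.sum_congr rfl fun d hd => ?_
    obtain ⟨hdn, -⟩ := Nat.mem_divisors.mp hd
    have hcount := count_units n d hn2 hdn
    have hd0 : d ≠ 0 := by rintro rfl; exact hn0 (Nat.eq_zero_of_zero_dvd hdn)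
    have htd : (d.totient : ℂ) ≠ 0 :=
      Nat.cast_ne_zero.mpr (Nat.totient_pos.mpr (Nat.pos_of_ne_zero hd0)).ne'
    have : ((((Finset.Icc 1 n).filter (fun j => Nat.gcd j n = 1 ∧ d ∣ j - 1)).card : ℂ))
        * (d.totient : ℂ) = (n.totient : ℂ) := by
      exact_mod_cast congrArg (Nat.cast : ℕ → ℂ) hcount
    field_simp
    linear_combination muConv f d * this
end

section
/- Let n ≥ 1, let χ be a primitive Dirichlet character mod n, and let x > 1 be real. Then Φ_n(x) = ∏_{j=1}^n (x^{gcd(j−1,n)} − 1)^{Re(χ(j))}, where the exponents are real powers (rpow) of the positive reals x^{gcd(j−1,n)} − 1, and gcd(0,n) = n for j = 1. -/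
/-!
Taking logarithms, `log (x ^ m - 1) = ∑_{d ∣ m} log Φ_d(x)`, and the divisors of
`gcd (j - 1) n` are the divisors `d` of `n` with `j ≡ 1 (mod d)`. Exchanging the two sums, the
coefficient of `log Φ_d(x)` is the sum of `χ` over the residues `≡ 1 (mod d)`. This vanishes
for `d < n`: `χ` does not factor through `d`, so some unit `u ≡ 1 (mod d)` has `χ u ≠ 1`, and
multiplication by `u` permutes those residues. For `d = n` the sum is `χ 1 = 1`.
-/

open Complex Polynomial Finset

theorem ZMod.sum_Icc_one_natCast {M : Type*} [AddCommMonoid M] (n : ℕ) [NeZero n]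
    (f : ZMod n → M) : ∑ j ∈ Icc 1 n, f j = ∑ a, f a := by
  refine Finset.sum_nbij' (fun j ↦ (j : ZMod n)) (fun a ↦ (a - 1).val + 1)
    (fun _ _ ↦ mem_univ _) (fun a _ ↦ ?_) (fun j hj ↦ ?_) (fun a _ ↦ ?_) (fun _ _ ↦ rfl)
  · have := (a - 1).val_lt
    simp only [mem_Icc]
    omega
  · obtain ⟨h1, hn⟩ := mem_Icc.mp hj
    have hj : ((j : ZMod n) - 1) = ((j - 1 : ℕ) : ZMod n) := by
      rw [Nat.cast_sub h1, Nat.cast_one]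
    rw [hj, ZMod.val_cast_of_lt (by omega)]
    omega
  · simp

theorem ZMod.natCast_eq_one_iff_dvd_sub_one {d j : ℕ} (hj : 1 ≤ j) :
    (j : ZMod d) = 1 ↔ d ∣ j - 1 := by
  rw [← ZMod.natCast_eq_zero_iff, Nat.cast_sub hj, Nat.cast_one, sub_eq_zero]

theorem Nat.divisors_gcd_eq_filter {m n : ℕ} (hn : n ≠ 0) :
    (m.gcd n).divisors = {d ∈ n.divisors | d ∣ m} := by
  rw [← Nat.divisors_filter_dvd_of_dvd hn (Nat.gcd_dvd_right m n)]
  exact filter_congr fun d hd ↦ by rw [Nat.dvd_gcd_iff, and_iff_left (Nat.dvd_of_mem_divisors hd)]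

theorem Real.log_pow_sub_one_eq_sum_log_cyclotomic {x : ℝ} (hx : 1 < x) {m : ℕ} (hm : 0 < m) :
    Real.log (x ^ m - 1) = ∑ d ∈ m.divisors, Real.log ((cyclotomic d ℝ).eval x) := by
  rw [← Real.log_prod fun d _ ↦ (cyclotomic_pos' d hx).ne', ← eval_prod,
    prod_cyclotomic_eq_X_pow_sub_one hm]
  simp

namespace DirichletCharacter

variable {R : Type*} [CommRing R] {n : ℕ}

theorem IsPrimitive.not_factorsThrough {χ : DirichletCharacter R n} (hχ : χ.IsPrimitive)
    {d : ℕ} (hd : d < n) : ¬ χ.FactorsThrough d := fun h ↦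
  hd.not_ge (hχ ▸ Nat.sInf_le h)

theorem sum_castHom_eq_one_eq_zero [IsDomain R] [NeZero n] (χ : DirichletCharacter R n)
    {d : ℕ} (hd : d ∣ n) (hχ : ¬ χ.FactorsThrough d) :
    ∑ a with ZMod.castHom hd (ZMod d) a = 1, χ a = 0 := by
  obtain ⟨u, hu, hχu⟩ := SetLike.not_le_iff_exists.mp
    ((factorsThrough_iff_ker_unitsMap hd).not.mp hχ)
  have hu1 : ZMod.castHom hd (ZMod d) u = 1 := by
    simpa [ZMod.unitsMap_def, Units.ext_iff] using hu
  have hχu1 : χ u ≠ 1 := fun h ↦ hχu (Units.ext (by simpa using h))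
  rw [Finset.sum_filter]
  have hS : χ u * ∑ a, (if ZMod.castHom hd (ZMod d) a = 1 then χ a else 0) =
      ∑ a, (if ZMod.castHom hd (ZMod d) a = 1 then χ a else 0) := by
    rw [Finset.mul_sum]
    exact Fintype.sum_equiv (Units.mulLeft u) _ _ fun a ↦ by
      simp only [Units.mulLeft_apply, map_mul, hu1, one_mul, mul_ite, mul_zero]
  exact (mul_left_eq_self₀.mp hS).resolve_left hχu1

theorem IsPrimitive.sum_Icc_dvd_sub_one [IsDomain R] [NeZero n] {χ : DirichletCharacter R n}
    (hχ : χ.IsPrimitive) {d : ℕ} (hd : d ∣ n) :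
    ∑ j ∈ Icc 1 n with d ∣ j - 1, χ j = if d = n then 1 else 0 := by
  split_ifs with hdn
  · subst hdn
    rw [sum_eq_single_of_mem 1 (by simp [NeZero.one_le]), Nat.cast_one, map_one]
    intro j hj hj1
    obtain ⟨⟨h1, hjd⟩, hdvd⟩ := by simpa only [mem_filter, mem_Icc] using hj
    have := Nat.eq_zero_of_dvd_of_lt hdvd (by omega)
    omega
  · have hlt : d < n := (Nat.le_of_dvd (Nat.pos_of_neZero n) hd).lt_of_ne hdn
    rw [← χ.sum_castHom_eq_one_eq_zero hd (hχ.not_factorsThrough hlt), sum_filter, sum_filter,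
      ← ZMod.sum_Icc_one_natCast]
    refine sum_congr rfl fun j hj ↦ ?_
    simp only [map_natCast, ZMod.natCast_eq_one_iff_dvd_sub_one (mem_Icc.mp hj).1]

theorem IsPrimitive.sum_log_pow_gcd_sub_one_mul_re [NeZero n] {χ : DirichletCharacter ℂ n}
    (hχ : χ.IsPrimitive) {x : ℝ} (hx : 1 < x) :
    ∑ j ∈ Icc 1 n, Real.log (x ^ (j - 1).gcd n - 1) * (χ j).re =
      Real.log ((cyclotomic n ℝ).eval x) :=
  calc _ = ∑ j ∈ Icc 1 n, ∑ d ∈ n.divisors,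
          if d ∣ j - 1 then Real.log ((cyclotomic d ℝ).eval x) * (χ j).re else 0 := by
        refine sum_congr rfl fun j _ ↦ ?_
        rw [Real.log_pow_sub_one_eq_sum_log_cyclotomic hx
            (Nat.gcd_pos_of_pos_right _ (Nat.pos_of_neZero n)),
          Nat.divisors_gcd_eq_filter (NeZero.ne n), sum_filter, sum_mul]
        exact sum_congr rfl fun d _ ↦ by split_ifs <;> simp
    _ = ∑ d ∈ n.divisors,
          Real.log ((cyclotomic d ℝ).eval x) * (∑ j ∈ Icc 1 n with d ∣ j - 1, χ j).re := by
        rw [sum_comm]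
        exact sum_congr rfl fun d _ ↦ by rw [re_sum, mul_sum, sum_filter]
    _ = Real.log ((cyclotomic n ℝ).eval x) := by
        rw [sum_congr rfl fun d hd ↦ by rw [hχ.sum_Icc_dvd_sub_one (Nat.dvd_of_mem_divisors hd)]]
        simp [apply_ite, NeZero.ne n]

end DirichletCharacter

theorem stmt16 (n : ℕ) (hn : 1 ≤ n) (χ : DirichletCharacter ℂ n)
    (hχ : χ.IsPrimitive) (x : ℝ) (hx : 1 < x) :
    (cyclotomic n ℝ).eval x =
      ∏ j ∈ Finset.Icc 1 n,
        (x ^ (Nat.gcd (j - 1) n) - 1) ^ ((χ (j : ZMod n)).re) := by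
  have : NeZero n := ⟨by omega⟩
  rw [← Real.exp_log (cyclotomic_pos' n hx), ← hχ.sum_log_pow_gcd_sub_one_mul_re hx,
    Real.exp_sum]
  refine prod_congr rfl fun j _ ↦ ?_
  rw [Real.rpow_def_of_pos (sub_pos.mpr (one_lt_pow₀ hx (Nat.gcd_pos_of_pos_right _ hn).ne'))]
end

section
/- Let f : ℕ_{≥1} → ℂ be an arbitrary function, let n ≥ 1 and let χ be a Dirichlet character mod n with conductor d (so d ∣ n). Then ∑_{j=1}^n f(gcd(j−1,n)) · χ(j) = φ(n) · ∑_{δ ∣ n/d} (μ*f)(dδ)/φ(dδ), with gcd(0,n) = n for j = 1. In particular, if χ is a primitive character mod n, then ∑_{j=1}^n f(gcd(j−1,n)) · χ(j) = (μ*f)(n). -/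
/-!
Möbius inversion gives `f (gcd (j - 1) n) = ∑_{e ∣ n, e ∣ j - 1} (μ * f) e`. After swapping the
sums, each divisor `e` of `n` contributes `(μ * f) e` times the sum of `χ` over the residues
`x ≡ 1 mod e`, i.e. over the kernel of `(ℤ/n)ˣ → (ℤ/e)ˣ`. By orthogonality that sum is the order
`φ n / φ e` of the kernel when `χ` is trivial on it, which means exactly that the conductor divides
`e`, and `0` otherwise. Writing `e = d δ` with `d` the conductor gives the formula.
-/

open Complex Finset

lemma sum_divisors_muConv (f : ℕ → ℂ) {m : ℕ} (hm : m ≠ 0) :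
    ∑ e ∈ m.divisors, muConv f e = f m := by
  refine ArithmeticFunction.sum_eq_iff_sum_smul_moebius_eq.mpr (fun k _ ↦ ?_) m
    (Nat.pos_of_ne_zero hm)
  rw [muConv,
    ← Nat.sum_divisorsAntidiagonal (fun a b ↦ (ArithmeticFunction.moebius a : ℂ) * f b)]
  simp [zsmul_eq_mul]

lemma apply_gcd_eq_sum_muConv (f : ℕ → ℂ) {n : ℕ} (hn : n ≠ 0) (a : ℕ) :
    f (a.gcd n) = ∑ e ∈ n.divisors, if e ∣ a then muConv f e else 0 := by
  have hgcd : a.gcd n ≠ 0 := Nat.gcd_ne_zero_right hn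
  rw [← sum_divisors_muConv f hgcd, ← sum_filter]
  congr 1
  ext e
  simp only [Nat.mem_divisors, mem_filter, Nat.dvd_gcd_iff]
  tauto

lemma sum_divisors_filter_dvd {M : Type*} [AddCommMonoid M] {d n : ℕ} (hd : d ∣ n)
    (hn : n ≠ 0) (g : ℕ → M) :
    ∑ e ∈ n.divisors with d ∣ e, g e = ∑ δ ∈ (n / d).divisors, g (d * δ) := by
  have hd0 : d ≠ 0 := ne_zero_of_dvd_ne_zero hn hd
  rw [← sum_image fun x _ y _ h ↦ Nat.eq_of_mul_eq_mul_left (Nat.pos_of_ne_zero hd0) h]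
  congr 1
  ext e
  simp only [mem_filter, Nat.mem_divisors, mem_image, Nat.dvd_div_iff_mul_dvd hd,
    Nat.div_ne_zero_iff_of_dvd hd]
  constructor
  · rintro ⟨⟨hen, -⟩, δ, rfl⟩
    exact ⟨δ, ⟨hen, hn, hd0⟩, rfl⟩
  · rintro ⟨δ, ⟨hδ, -⟩, rfl⟩
    exact ⟨⟨hδ, hn⟩, dvd_mul_right d δ⟩

lemma sum_Icc_one_natCast_eq_sum_zmod {M : Type*} [AddCommMonoid M] (n : ℕ) [NeZero n]
    (g : ZMod n → M) : ∑ j ∈ Icc 1 n, g j = ∑ x : ZMod n, g x := by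
  refine sum_nbij' (fun j ↦ (j : ZMod n)) (fun x ↦ (x - 1).val + 1) (fun _ _ ↦ mem_univ _)
    (fun x _ ↦ mem_Icc.mpr ⟨by omega, (ZMod.val_lt (x - 1))⟩) (fun j hj ↦ ?_) (fun x _ ↦ ?_)
    (fun _ _ ↦ rfl)
  · obtain ⟨h1, hn⟩ := mem_Icc.mp hj
    rw [← Nat.cast_one, ← Nat.cast_sub h1, ZMod.val_natCast, Nat.mod_eq_of_lt (by omega)]
    omega
  · simp

lemma gcd_val_natCast_sub_one {n j : ℕ} (hj : 1 ≤ j) :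
    ((j : ZMod n) - 1).val.gcd n = (j - 1).gcd n := by
  rw [← Nat.cast_one, ← Nat.cast_sub hj, ZMod.val_natCast, ← Nat.gcd_rec, Nat.gcd_comm]

lemma dvd_val_sub_one_iff {n e : ℕ} [NeZero n] (he : e ∣ n) (x : ZMod n) :
    e ∣ (x - 1).val ↔ ZMod.castHom he (ZMod e) x = 1 := by
  rw [← ZMod.natCast_eq_zero_iff, ZMod.natCast_val, ← ZMod.castHom_apply, map_sub, map_one,
    sub_eq_zero]

lemma card_ker_unitsMap {n e : ℕ} [NeZero n] (he : e ∣ n) :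
    Nat.card (ZMod.unitsMap he).ker = n.totient / e.totient := by
  have : NeZero e := ⟨ne_zero_of_dvd_ne_zero (NeZero.ne n) he⟩
  have hrange : (ZMod.unitsMap he).range = ⊤ :=
    MonoidHom.range_eq_top.mpr (ZMod.unitsMap_surjective he)
  have hcard := Subgroup.card_mul_index (ZMod.unitsMap he).ker
  rw [Subgroup.index_ker, hrange, Subgroup.card_top, Nat.card_eq_fintype_card (α := (ZMod e)ˣ),
    Nat.card_eq_fintype_card (α := (ZMod n)ˣ), ZMod.card_units_eq_totient,
    ZMod.card_units_eq_totient] at hcard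
  rw [← hcard, Nat.mul_div_cancel _ (Nat.totient_pos.mpr (Nat.pos_of_ne_zero (NeZero.ne e)))]

lemma sum_eq_sum_units {M R : Type*} [Monoid M] [Fintype M] [Fintype Mˣ] [AddCommMonoid R]
    {g : M → R} (hg : ∀ x, ¬IsUnit x → g x = 0) : ∑ x, g x = ∑ u : Mˣ, g u :=
  (Fintype.sum_of_injective _ Units.val_injective _ _
    (fun x hx ↦ hg x fun ⟨u, hu⟩ ↦ hx ⟨u, hu⟩) fun _ ↦ rfl).symm

namespace DirichletCharacter

variable {R : Type*} {n : ℕ} [NeZero n]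

lemma conductor_dvd_iff_ker_unitsMap_le [CommMonoidWithZero R] (χ : DirichletCharacter R n)
    {e : ℕ} (he : e ∣ n) :
    χ.conductor ∣ e ↔ (ZMod.unitsMap he).ker ≤ χ.toUnitHom.ker :=
  (χ.mem_conductorSet_iff_conductor_dvd he).symm.trans (factorsThrough_iff_ker_unitsMap he)

lemma sum_filter_dvd_val_sub_one [CommRing R] [IsDomain R] (χ : DirichletCharacter R n)
    {e : ℕ} (he : e ∣ n) :
    ∑ x : ZMod n with e ∣ (x - 1).val, χ x =
      if χ.conductor ∣ e then ((n.totient / e.totient : ℕ) : R) else 0 := by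
  classical
  set K := (ZMod.unitsMap he).ker
  let ψ : K →* R := (Units.coeHom R).comp (χ.toUnitHom.domRestrict K)
  have hsum : ∑ x : ZMod n with e ∣ (x - 1).val, χ x = ∑ u : K, ψ u := by
    rw [sum_filter, sum_eq_sum_units fun x hx ↦ by rw [χ.map_nonunit hx, ite_self], ← sum_filter]
    refine sum_subtype _ (fun u ↦ ?_) _
    rw [mem_filter, dvd_val_sub_one_iff he, MonoidHom.mem_ker, Units.ext_iff]
    simp [ZMod.unitsMap_val]
  have hψ : ψ = 1 ↔ χ.conductor ∣ e := by
    rw [χ.conductor_dvd_iff_ker_unitsMap_le he, ← MonoidHom.comp_one (Units.coeHom R),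
      MonoidHom.cancel_left Units.coeHom_injective, MonoidHom.domRestrict_eq_one_iff]
    rfl
  rw [hsum, sum_hom_units, ← card_ker_unitsMap he, ← Nat.card_eq_fintype_card]
  simp only [hψ, Nat.cast_ite, Nat.cast_zero]
  rfl

end DirichletCharacter

lemma sum_Icc_gcd_mul_eq_sum_divisors (f : ℕ → ℂ) {n : ℕ} [NeZero n]
    (χ : DirichletCharacter ℂ n) :
    ∑ j ∈ Icc 1 n, f ((j - 1).gcd n) * χ j =
      ∑ e ∈ n.divisors with χ.conductor ∣ e,
        muConv f e * ((n.totient : ℂ) / (e.totient : ℂ)) := by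
  calc ∑ j ∈ Icc 1 n, f ((j - 1).gcd n) * χ j
      = ∑ x : ZMod n, f ((x - 1).val.gcd n) * χ x := by
        rw [← sum_Icc_one_natCast_eq_sum_zmod]
        exact sum_congr rfl fun j hj ↦ by rw [gcd_val_natCast_sub_one (mem_Icc.mp hj).1]
    _ = ∑ e ∈ n.divisors, muConv f e * ∑ x : ZMod n with e ∣ (x - 1).val, χ x := by
        simp_rw [apply_gcd_eq_sum_muConv f (NeZero.ne n), sum_mul, mul_sum, sum_filter]
        rw [sum_comm]
        simp only [ite_mul, zero_mul]
    _ = ∑ e ∈ n.divisors, if χ.conductor ∣ e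
          then muConv f e * ((n.totient : ℂ) / (e.totient : ℂ)) else 0 := by
        refine sum_congr rfl fun e he ↦ ?_
        have he : e ∣ n := Nat.dvd_of_mem_divisors he
        have htotient : (e.totient : ℂ) ≠ 0 :=
          Nat.cast_ne_zero.mpr (Nat.totient_pos.mpr (Nat.pos_of_dvd_of_pos he (NeZero.pos n))).ne'
        rw [χ.sum_filter_dvd_val_sub_one he, Nat.cast_div (Nat.totient_dvd_of_dvd he) htotient]
        split_ifs <;> simp
    _ = _ := (sum_filter _ _).symm

theorem stmt17 (f : ℕ → ℂ) (n : ℕ) (hn : 1 ≤ n) (χ : DirichletCharacter ℂ n) :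
    (∑ j ∈ Finset.Icc 1 n, f (Nat.gcd (j - 1) n) * χ (j : ZMod n) =
        (Nat.totient n : ℂ) * ∑ δ ∈ (n / χ.conductor).divisors,
          muConv f (χ.conductor * δ) / (Nat.totient (χ.conductor * δ) : ℂ)) ∧
      (χ.IsPrimitive →
        ∑ j ∈ Finset.Icc 1 n, f (Nat.gcd (j - 1) n) * χ (j : ZMod n) = muConv f n) := by
  have : NeZero n := ⟨by omega⟩
  have hsum : ∑ j ∈ Icc 1 n, f ((j - 1).gcd n) * χ j =
      n.totient * ∑ δ ∈ (n / χ.conductor).divisors,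
        muConv f (χ.conductor * δ) / ((χ.conductor * δ).totient : ℂ) := by
    rw [sum_Icc_gcd_mul_eq_sum_divisors,
      sum_divisors_filter_dvd χ.conductor_dvd_level (NeZero.ne n), mul_sum]
    exact sum_congr rfl fun _ _ ↦ mul_div_left_comm _ _ _
  refine ⟨hsum, fun hχ ↦ ?_⟩
  have htotient : (n.totient : ℂ) ≠ 0 := Nat.cast_ne_zero.mpr (Nat.totient_pos.mpr hn).ne'
  rw [hsum, χ.isPrimitive_def.mp hχ, Nat.div_self (by omega), Nat.divisors_one, sum_singleton,
    mul_one, mul_div_cancel₀ _ htotient]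
end
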